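/- For any tree plan Γ and any m ≤ n < ω, every embedding h : Γ(m) → Γ(n) of L_Γ-structures satisfies π_m(a) = π_n(h(a)) for all a ∈ Γ(m), and there exists an automorphism g of Γ(n) with g ∘ h = id_{Γ(m)}. -/

import Mathlib

/-! An embedding `h : Γ(m) → Γ(n)` preserves `π`, so it can only change the labels at
infinity nodes. At a node `a ∈ Γ(m)` and an index `i` of an infinity successor, `h` induces an
injection `x ↦ y` of `[m]` into `[n]`, determined by `h (a ⌢ (i, x)) = h a ⌢ (i, y)`. Extend the
inverse of each such injection to a permutation of `[n]`, and relabel every entry of a sequence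
by the permutation attached to its parent node and its index: this is an injective self-embedding
of `Γ(n)` undoing `h`, hence an automorphism because `Γ(n)` is finite. -/

/-- A tree plan: a finite set of nodes of `ω^{<ω}` together with a labeling,
`lab σ = true` meaning `λ(σ) = ∞` and `lab σ = false` meaning `λ(σ) = 1`. -/
structure TreePlan where
  nodes : Finset (List ℕ)
  lab : List ℕ → Bool

/-- The conditions making the data of a `TreePlan` an actual tree plan:
it contains the root, is closed under predecessor, and the root is not an infinity-node. -/
def IsTreePlan (Γ : TreePlan) : Prop :=
  [] ∈ Γ.nodes ∧ (∀ σ ∈ Γ.nodes, σ.dropLast ∈ Γ.nodes) ∧ Γ.lab [] = false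

/-- The projection `π` forgetting the second coordinates. -/
def piX {S : Type*} (a : List (ℕ × Option S)) : List ℕ := a.map Prod.fst

/-- The tree `Γ(X)`, for `X` a set in an ambient type `S`.  Entries are pairs `(i, t)`
where `t = none` codes `★` (at nodes with `λ = 1`) and `t = some x` with `x ∈ X`
at infinity-nodes. -/
def GammaSet (Γ : TreePlan) {S : Type*} (X : Set S) : Set (List (ℕ × Option S)) :=
  {a | piX a ∈ Γ.nodes ∧ ∀ (k : ℕ) (hk : k < a.length),
    (Γ.lab ((piX a).take (k + 1)) = false → (a.get ⟨k, hk⟩).2 = none) ∧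
    (Γ.lab ((piX a).take (k + 1)) = true → ∃ x ∈ X, (a.get ⟨k, hk⟩).2 = some x)}

/-- `Γ(ω)`, realized with `X = ℕ`. -/
def GammaOmega (Γ : TreePlan) : Set (List (ℕ × Option ℕ)) :=
  GammaSet Γ (Set.univ : Set ℕ)

/-- `Γ(n) = Γ([n])` with `[n] = {0, …, n-1} ⊆ ℕ`. -/
def GammaN (Γ : TreePlan) (n : ℕ) : Set (List (ℕ × Option ℕ)) :=
  GammaSet Γ {k : ℕ | k < n}

/-- `↓B`, the downward closure of `B` in `Γ(X)` with respect to the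
initial-segment order. -/
def downSet (Γ : TreePlan) {S : Type*} (X : Set S) (B : Set (List (ℕ × Option S))) :
    Set (List (ℕ × Option S)) :=
  {a ∈ GammaSet Γ X | ∃ b ∈ B, a <+: b}

/-- The approximations to the tree closure. -/
def tclAux (Γ : TreePlan) {S : Type*} (X : Set S) (B : Set (List (ℕ × Option S))) :
    ℕ → Set (List (ℕ × Option S))
  | 0 => insert [] (downSet Γ X B)
  | n + 1 => tclAux Γ X B n ∪
      {a ∈ GammaSet Γ X | Γ.lab (piX a) = false ∧ a.dropLast ∈ tclAux Γ X B n}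

/-- The tree closure `tcl(B)` of `B ⊆ Γ(X)`. -/
def tcl (Γ : TreePlan) {S : Type*} (X : Set S) (B : Set (List (ℕ × Option S))) :
    Set (List (ℕ × Option S)) :=
  ⋃ n, tclAux Γ X B n

/-- Longest common prefix of two lists: the meet in the tree of sequences. -/
def lcp {α : Type*} [DecidableEq α] : List α → List α → List α
  | a :: as, b :: bs => if a = b then a :: lcp as bs else []
  | _, _ => []

/-- Embedding of `L_Γ`-structures between subsets `A`, `B` of trees of sequences:
an injection preserving the order (initial segment), the root, the predecessor,
the meet, and the predicates `P_σ` (i.e. the projection `π`). -/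
structure IsGEmb (Γ : TreePlan) {S T : Type*} [DecidableEq S] [DecidableEq T]
    (A : Set (List (ℕ × Option S))) (B : Set (List (ℕ × Option T)))
    (h : List (ℕ × Option S) → List (ℕ × Option T)) : Prop where
  maps : ∀ a ∈ A, h a ∈ B
  inj : ∀ a ∈ A, ∀ b ∈ A, h a = h b → a = b
  map_root : h [] = []
  map_le : ∀ a ∈ A, ∀ b ∈ A, (a <+: b ↔ h a <+: h b)
  map_pred : ∀ a ∈ A, h a.dropLast = (h a).dropLast
  map_meet : ∀ a ∈ A, ∀ b ∈ A, h (lcp a b) = lcp (h a) (h b)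
  map_P : ∀ a ∈ A, piX (h a) = piX a

open Classical in
/-- `I(Γ, σ)`: the number of infinity-nodes `τ ∈ Γ` with `τ ≤ σ`. -/
noncomputable def Icount (Γ : TreePlan) (σ : List ℕ) : ℕ :=
  (Γ.nodes.filter fun τ => Γ.lab τ = true ∧ τ <+: σ).card

open Classical in
/-- The relative tree plan `Γ_σ = {τ : σ⌢τ ∈ Γ}` with induced labeling. -/
noncomputable def TreePlan.sub (Γ : TreePlan) (σ : List ℕ) : TreePlan where
  nodes := (Γ.nodes.filter fun τ => σ <+: τ).image (List.drop σ.length)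
  lab := fun τ => if τ = [] then false else Γ.lab (σ ++ τ)

open Classical in
/-- The successors of the root of `Γ`. -/
noncomputable def rootSuccs (Γ : TreePlan) : Finset ℕ :=
  (Γ.nodes.filter fun σ => σ.length = 1).image fun σ => σ.headI

/-- `deg(Γ) = max {I(Γ,σ) : σ ∈ Γ}`. -/
noncomputable def degPlan (Γ : TreePlan) : ℕ := Γ.nodes.sup fun σ => Icount Γ σ

open Classical in
/-- `A(Γ)`: the number of nodes of `Γ` of maximal degree. -/
noncomputable def Acoef (Γ : TreePlan) : ℕ :=
  (Γ.nodes.filter fun σ => Icount Γ σ = degPlan Γ).card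

open Set

section Lcp

variable {α : Type*} [DecidableEq α]

lemma lcp_prefix_left (l₁ l₂ : List α) : lcp l₁ l₂ <+: l₁ := by
  induction l₁ generalizing l₂ with
  | nil => cases l₂ <;> simp [lcp]
  | cons a as ih =>
    cases l₂ with
    | nil => simp [lcp]
    | cons b bs =>
      by_cases hab : a = b
      · simpa [lcp, hab] using ih bs
      · simp [lcp, hab]

lemma lcp_prefix_right (l₁ l₂ : List α) : lcp l₁ l₂ <+: l₂ := by
  induction l₁ generalizing l₂ with
  | nil => cases l₂ <;> simp [lcp]
  | cons a as ih =>
    cases l₂ with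
    | nil => simp [lcp]
    | cons b bs =>
      by_cases hab : a = b
      · simpa [lcp, hab] using ih bs
      · simp [lcp, hab]

lemma prefix_lcp {c l₁ l₂ : List α} (h₁ : c <+: l₁) (h₂ : c <+: l₂) : c <+: lcp l₁ l₂ := by
  induction l₁ generalizing c l₂ with
  | nil => rw [List.prefix_nil.mp h₁]; exact List.nil_prefix
  | cons a as ih =>
    cases c with
    | nil => exact List.nil_prefix
    | cons x xs =>
      cases l₂ with
      | nil => simp at h₂
      | cons b bs =>
        obtain ⟨rfl, hx₁⟩ := List.cons_prefix_cons.mp h₁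
        obtain ⟨rfl, hx₂⟩ := List.cons_prefix_cons.mp h₂
        simpa [lcp] using ih hx₁ hx₂

end Lcp

lemma List.finite_length_le_forall_mem {α : Type*} {F : Set α} (hF : F.Finite) (N : ℕ) :
    {l : List α | l.length ≤ N ∧ ∀ c ∈ l, c ∈ F}.Finite := by
  have := hF.to_subtype
  refine ((List.finite_length_le F N).image (List.map Subtype.val)).subset ?_
  rintro l ⟨hl, hlF⟩
  exact ⟨l.attachWith _ hlF, by simpa using hl, List.attachWith_map_subtype_val hlF⟩

section GammaSet

variable {Γ : TreePlan} {S : Type*} {X : Set S}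

@[simp]
lemma length_piX (a : List (ℕ × Option S)) : (piX a).length = a.length := List.length_map _

@[simp]
lemma piX_append (a b : List (ℕ × Option S)) : piX (a ++ b) = piX a ++ piX b := List.map_append

@[simp]
lemma piX_singleton (c : ℕ × Option S) : piX [c] = [c.1] := rfl

lemma piX_take (a : List (ℕ × Option S)) (k : ℕ) : piX (a.take k) = (piX a).take k :=
  List.map_take

lemma mem_gammaSet_iff {a : List (ℕ × Option S)} :
    a ∈ GammaSet Γ X ↔ piX a ∈ Γ.nodes ∧ ∀ (k : ℕ) (hk : k < a.length),
      (Γ.lab ((piX a).take (k + 1)) = false → a[k].2 = none) ∧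
      (Γ.lab ((piX a).take (k + 1)) = true → ∃ x ∈ X, a[k].2 = some x) := by
  simp [GammaSet, List.get_eq_getElem]

lemma IsTreePlan.take_mem_nodes (hΓ : IsTreePlan Γ) {σ : List ℕ} (hσ : σ ∈ Γ.nodes) (k : ℕ) :
    σ.take k ∈ Γ.nodes := by
  induction σ using List.reverseRecOn with
  | nil => simpa using hσ
  | append_singleton τ i ih =>
    have hτ : τ ∈ Γ.nodes := by simpa using hΓ.2.1 _ hσ
    rcases le_or_gt k τ.length with hk | hk
    · simpa [List.take_append_of_le_length hk] using ih hτ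
    · rwa [List.take_of_length_le (by simp; omega)]

lemma IsTreePlan.take_mem_gammaSet (hΓ : IsTreePlan Γ) {a : List (ℕ × Option S)}
    (ha : a ∈ GammaSet Γ X) (k : ℕ) : a.take k ∈ GammaSet Γ X := by
  rw [mem_gammaSet_iff] at ha ⊢
  refine ⟨by simpa [piX_take] using hΓ.take_mem_nodes ha.1 k, fun j hj => ?_⟩
  have hjk : j < k ∧ j < a.length := by simpa using hj
  have hpre : (piX (a.take k)).take (j + 1) = (piX a).take (j + 1) := by
    rw [piX_take, List.take_take, min_eq_left (by omega)]
  simpa only [hpre, List.getElem_take] using ha.2 j hjk.2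

lemma append_singleton_mem_gammaSet_iff {b : List (ℕ × Option S)} (hb : b ∈ GammaSet Γ X)
    (i : ℕ) (t : Option S) :
    b ++ [(i, t)] ∈ GammaSet Γ X ↔ piX b ++ [i] ∈ Γ.nodes ∧
      (Γ.lab (piX b ++ [i]) = false → t = none) ∧
      (Γ.lab (piX b ++ [i]) = true → ∃ x ∈ X, t = some x) := by
  rw [mem_gammaSet_iff] at hb ⊢
  simp only [piX_append, piX_singleton, List.length_append, List.length_singleton]
  refine and_congr_right fun _ => ⟨fun H => ?_, fun H k hk => ?_⟩
  · simpa [List.take_of_length_le] using H b.length (by omega)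
  · rcases Nat.lt_succ_iff_lt_or_eq.mp hk with hk | rfl
    · have hpre : (piX b ++ [i]).take (k + 1) = (piX b).take (k + 1) :=
        List.take_append_of_le_length (by simp; omega)
      simpa only [hpre, List.getElem_append_left hk] using hb.2 k hk
    · simpa [List.take_of_length_le] using H

lemma gammaSet_finite (hX : X.Finite) : (GammaSet Γ X).Finite := by
  have hfst : {i | ∃ σ ∈ Γ.nodes, i ∈ σ}.Finite := by
    convert (Γ.nodes.biUnion List.toFinset).finite_toSet using 1
    ext; simp
  refine (List.finite_length_le_forall_mem (hfst.prod ((hX.image some).insert none))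
    (Γ.nodes.sup List.length)).subset fun a ha => ?_
  rw [mem_gammaSet_iff] at ha
  refine ⟨by simpa using Finset.le_sup (f := List.length) ha.1, fun c hc => ?_⟩
  obtain ⟨k, hk, rfl⟩ := List.getElem_of_mem hc
  refine ⟨⟨piX a, ha.1, List.mem_map_of_mem hc⟩, ?_⟩
  cases hlab : Γ.lab ((piX a).take (k + 1))
  · simp [(ha.2 k hk).1 hlab]
  · obtain ⟨x, hx, hax⟩ := (ha.2 k hk).2 hlab
    simp [hax, hx]

end GammaSet

lemma isGEmb_of_take {Γ : TreePlan} {S T : Type*} [DecidableEq S] [DecidableEq T]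
    {A : Set (List (ℕ × Option S))} {B : Set (List (ℕ × Option T))}
    (hA : ∀ a ∈ A, ∀ k, a.take k ∈ A) {g : List (ℕ × Option S) → List (ℕ × Option T)}
    (hmaps : MapsTo g A B) (hinj : InjOn g A) (hlen : ∀ a, (g a).length = a.length)
    (htake : ∀ a k, g (a.take k) = (g a).take k) (hπ : ∀ a, piX (g a) = piX a) :
    IsGEmb Γ A B g := by
  have hle : ∀ a ∈ A, ∀ b ∈ A, (a <+: b ↔ g a <+: g b) := by
    intro a ha b hb
    rw [List.prefix_iff_eq_take, List.prefix_iff_eq_take, hlen, ← htake]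
    exact ⟨congrArg g, fun h => hinj ha (hA b hb _) h⟩
  refine ⟨hmaps, fun a ha b hb => @hinj a ha b hb, List.eq_nil_of_length_eq_zero (hlen []),
    hle, fun a _ => ?_, fun a ha b hb => ?_, fun a _ => hπ a⟩
  · rw [List.dropLast_eq_take, List.dropLast_eq_take, hlen, htake]
  · have hlcp : lcp a b ∈ A := by
      rw [List.prefix_iff_eq_take.mp (lcp_prefix_left a b)]
      exact hA a ha _
    have h₁ : g (lcp a b) <+: lcp (g a) (g b) :=
      prefix_lcp ((hle _ hlcp _ ha).mp (lcp_prefix_left a b))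
        ((hle _ hlcp _ hb).mp (lcp_prefix_right a b))
    have h₂ : lcp (g a) (g b) <+: g (lcp a b) := by
      set j := (lcp (g a) (g b)).length
      have hda : lcp (g a) (g b) = g (a.take j) := by
        rw [htake]; exact List.prefix_iff_eq_take.mp (lcp_prefix_left _ _)
      have hdb : lcp (g a) (g b) = g (b.take j) := by
        rw [htake]; exact List.prefix_iff_eq_take.mp (lcp_prefix_right _ _)
      have hab : a.take j = b.take j := hinj (hA a ha j) (hA b hb j) (hda.symm.trans hdb)
      have hpre : a.take j <+: lcp a b :=
        prefix_lcp (List.take_prefix j a) (hab ▸ List.take_prefix j b)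
      rw [hda]
      exact (hle _ (hA a ha j) _ hlcp).mp hpre
    exact h₁.eq_of_length (le_antisymm h₁.length_le h₂.length_le)

section Relabel

variable {S : Type*} (P : List (ℕ × Option S) → ℕ → Equiv.Perm S)

def relabel (b : List (ℕ × Option S)) : List (ℕ × Option S) :=
  b.mapIdx fun k c => (c.1, c.2.map (P (b.take k) c.1))

@[simp]
lemma length_relabel (b : List (ℕ × Option S)) : (relabel P b).length = b.length :=
  List.length_mapIdx

lemma getElem_relabel (b : List (ℕ × Option S)) {k : ℕ} (hk : k < b.length) :
    (relabel P b)[k]'(by simpa using hk) = (b[k].1, b[k].2.map (P (b.take k) b[k].1)) :=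
  List.getElem_mapIdx

lemma relabel_take (b : List (ℕ × Option S)) (k : ℕ) :
    relabel P (b.take k) = (relabel P b).take k := by
  refine List.ext_getElem (by simp) fun j hj _ => ?_
  have hjk : j < k := by simp at hj; omega
  simp [relabel, List.take_take, min_eq_left hjk.le]

lemma piX_relabel (b : List (ℕ × Option S)) : piX (relabel P b) = piX b :=
  List.ext_getElem (by simp) fun j _ _ => by simp [piX, relabel]

lemma relabel_append_singleton (b : List (ℕ × Option S)) (c : ℕ × Option S) :
    relabel P (b ++ [c]) = relabel P b ++ [(c.1, c.2.map (P b c.1))] := by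
  refine List.ext_getElem (by simp) fun j hj _ => ?_
  rcases Nat.lt_succ_iff_lt_or_eq.mp (by simpa using hj) with hj | rfl
  · simp [relabel, List.getElem_append_left, hj, List.take_append_of_le_length hj.le]
  · simp [relabel]

lemma relabel_injective : Function.Injective (relabel P) := by
  intro a
  induction a using List.reverseRecOn with
  | nil => intro b hb; simpa [eq_comm] using congrArg List.length hb
  | append_singleton a c ih =>
    intro b hb
    induction b using List.reverseRecOn with
    | nil => simpa using congrArg List.length hb
    | append_singleton b d _ =>
      rw [relabel_append_singleton, relabel_append_singleton] at hb
      obtain ⟨hab, hcd⟩ := List.append_inj' hb rfl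
      obtain rfl := ih hab
      simp only [List.cons.injEq, Prod.mk.injEq, and_true] at hcd
      obtain ⟨h₁, h₂⟩ := hcd
      rw [h₁] at h₂
      rw [Prod.ext h₁ (Option.map_injective (P a d.1).injective h₂)]

variable {Γ : TreePlan} {X : Set S}

lemma mapsTo_relabel (hP : ∀ c i, MapsTo (P c i) X X) :
    MapsTo (relabel P) (GammaSet Γ X) (GammaSet Γ X) := by
  intro b hb
  rw [mem_gammaSet_iff] at hb ⊢
  refine ⟨by rw [piX_relabel]; exact hb.1, fun k hk => ?_⟩
  have hkb : k < b.length := by simpa using hk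
  obtain ⟨hnone, hsome⟩ := hb.2 k hkb
  rw [piX_relabel, getElem_relabel P b hkb]
  refine ⟨fun hl => by simp [hnone hl], fun hl => ?_⟩
  obtain ⟨x, hx, hbx⟩ := hsome hl
  exact ⟨P (b.take k) b[k].1 x, hP _ _ hx, by simp [hbx]⟩

lemma isGEmb_relabel [DecidableEq S] (hΓ : IsTreePlan Γ) (hP : ∀ c i, MapsTo (P c i) X X) :
    IsGEmb Γ (GammaSet Γ X) (GammaSet Γ X) (relabel P) :=
  isGEmb_of_take (fun _ ha k => hΓ.take_mem_gammaSet ha k) (mapsTo_relabel P hP)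
    (relabel_injective P).injOn (length_relabel P) (relabel_take P) (piX_relabel P)

lemma surjOn_relabel (hX : X.Finite) (hP : ∀ c i, MapsTo (P c i) X X) :
    SurjOn (relabel P) (GammaSet Γ X) (GammaSet Γ X) :=
  ((gammaSet_finite hX).injOn_iff_bijOn_of_mapsTo (mapsTo_relabel P hP)).mp
    (relabel_injective P).injOn |>.surjOn

end Relabel

lemma exists_perm_mapsTo_leftInvOn {α : Type*} {s t : Set α} (ht : t.Finite) (hst : s ⊆ t)
    {f : α → α} (hf : InjOn f s) (hft : MapsTo f s t) :
    ∃ σ : Equiv.Perm α, MapsTo σ t t ∧ LeftInvOn σ f s := by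
  classical
  have := ht.to_subtype
  have := (ht.subset hst).to_subtype
  obtain ⟨σ, hσ⟩ := Equiv.Perm.exists_extending_pair (fun x : s => (⟨f x, hft x.2⟩ : t))
    (fun x : s => (⟨x, hst x.2⟩ : t))
    (fun x y hxy => Subtype.ext (hf x.2 y.2 (congrArg Subtype.val hxy)))
    (fun x y hxy => Subtype.ext (by simpa using hxy))
  refine ⟨Equiv.Perm.ofSubtype σ, fun x hx => (Equiv.Perm.ofSubtype_apply_mem_iff_mem σ x).2 hx,
    fun x hx => ?_⟩
  rw [Equiv.Perm.ofSubtype_apply_of_mem σ (hft hx)]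
  exact congrArg Subtype.val (hσ ⟨x, hx⟩)

namespace IsGEmb

variable {Γ : TreePlan} {S : Type*} [DecidableEq S] {h : List (ℕ × Option S) → List (ℕ × Option S)}

lemma map_append_singleton {A B : Set (List (ℕ × Option S))} (hemb : IsGEmb Γ A B h)
    {b : List (ℕ × Option S)} {c : ℕ × Option S} (hbc : b ++ [c] ∈ A) :
    ∃ t, h (b ++ [c]) = h b ++ [(c.1, t)] := by
  have hπ := hemb.map_P _ hbc
  have hne : h (b ++ [c]) ≠ [] := by
    rintro h0
    simp [h0, piX] at hπ
  have hlast : ((h (b ++ [c])).getLast hne).1 = c.1 := by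
    simpa [piX, List.getLast?_eq_some_getLast hne] using congrArg List.getLast? hπ
  refine ⟨((h (b ++ [c])).getLast hne).2, ?_⟩
  have hpred := hemb.map_pred _ hbc
  rw [List.dropLast_concat] at hpred
  rw [hpred, ← hlast]
  exact (List.dropLast_append_getLast hne).symm

variable {X Y : Set S}

lemma map_append_none (hemb : IsGEmb Γ (GammaSet Γ X) (GammaSet Γ Y) h)
    {b : List (ℕ × Option S)} (hb : b ∈ GammaSet Γ X) {i : ℕ}
    (hbi : b ++ [(i, none)] ∈ GammaSet Γ X) : h (b ++ [(i, none)]) = h b ++ [(i, none)] := by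
  obtain ⟨t, ht⟩ := hemb.map_append_singleton hbi
  have hmem := hemb.maps _ hbi
  rw [ht, append_singleton_mem_gammaSet_iff (hemb.maps b hb), hemb.map_P b hb] at hmem
  rw [append_singleton_mem_gammaSet_iff hb] at hbi
  cases hl : Γ.lab (piX b ++ [i])
  · rw [ht, hmem.2.1 hl]
  · exact absurd (hbi.2.2 hl) (by simp)

lemma map_append_some (hemb : IsGEmb Γ (GammaSet Γ X) (GammaSet Γ Y) h)
    {b : List (ℕ × Option S)} (hb : b ∈ GammaSet Γ X) {i : ℕ} {x : S}
    (hbx : b ++ [(i, some x)] ∈ GammaSet Γ X) :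
    ∃ y ∈ Y, h (b ++ [(i, some x)]) = h b ++ [(i, some y)] := by
  obtain ⟨t, ht⟩ := hemb.map_append_singleton hbx
  have hmem := hemb.maps _ hbx
  rw [ht, append_singleton_mem_gammaSet_iff (hemb.maps b hb), hemb.map_P b hb] at hmem
  rw [append_singleton_mem_gammaSet_iff hb] at hbx
  cases hl : Γ.lab (piX b ++ [i])
  · exact absurd (hbx.2.1 hl) (by simp)
  · obtain ⟨y, hy, rfl⟩ := hmem.2.2 hl
    exact ⟨y, hy, ht⟩

lemma exists_slot_perm (hXY : X ⊆ Y) (hY : Y.Finite)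
    (hemb : IsGEmb Γ (GammaSet Γ X) (GammaSet Γ Y) h) (c : List (ℕ × Option S)) (i : ℕ) :
    ∃ σ : Equiv.Perm S, MapsTo σ Y Y ∧ ∀ a ∈ GammaSet Γ X, h a = c → ∀ x y,
      a ++ [(i, some x)] ∈ GammaSet Γ X → h (a ++ [(i, some x)]) = c ++ [(i, some y)] →
        σ y = x := by
  by_cases H : ∃ a ∈ GammaSet Γ X, h a = c ∧ ∃ x₀, a ++ [(i, some x₀)] ∈ GammaSet Γ X
  swap
  · exact ⟨1, mapsTo_id _, fun a ha hac x _ hx _ => (H ⟨a, ha, hac, x, hx⟩).elim⟩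
  obtain ⟨a, ha, rfl, x₀, hx₀⟩ := H
  have hslot : ∀ x, a ++ [(i, some x)] ∈ GammaSet Γ X ↔ x ∈ X := by
    rw [append_singleton_mem_gammaSet_iff ha] at hx₀
    have hlab : Γ.lab (piX a ++ [i]) = true := by
      cases hl : Γ.lab (piX a ++ [i])
      · exact absurd (hx₀.2.1 hl) (by simp)
      · rfl
    intro x
    simp [append_singleton_mem_gammaSet_iff ha, hx₀.1, hlab]
  have hchild : ∀ x ∈ X, ∃ y ∈ Y, h (a ++ [(i, some x)]) = h a ++ [(i, some y)] :=
    fun x hx => hemb.map_append_some ha ((hslot x).mpr hx)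
  have : Nonempty S := ⟨x₀⟩
  choose! f hfY hf using hchild
  have hfinj : InjOn f X := fun x hx x' hx' hxx' => by
    simpa using hemb.inj _ ((hslot x).mpr hx) _ ((hslot x').mpr hx')
      (by rw [hf x hx, hf x' hx', hxx'])
  obtain ⟨σ, hσY, hσ⟩ := exists_perm_mapsTo_leftInvOn hY hXY hfinj hfY
  refine ⟨σ, hσY, fun a' ha' haa' x y hx hxy => ?_⟩
  obtain rfl := hemb.inj _ ha' _ ha haa'
  have hxX := (hslot x).mp hx
  rw [hf x hxX] at hxy
  obtain rfl : f x = y := by simpa using hxy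
  exact hσ hxX

theorem exists_automorphism_leftInvOn (hΓ : IsTreePlan Γ) (hXY : X ⊆ Y) (hY : Y.Finite)
    (hemb : IsGEmb Γ (GammaSet Γ X) (GammaSet Γ Y) h) :
    ∃ g, IsGEmb Γ (GammaSet Γ Y) (GammaSet Γ Y) g ∧ SurjOn g (GammaSet Γ Y) (GammaSet Γ Y) ∧
      LeftInvOn g h (GammaSet Γ X) := by
  choose P hPY hP using hemb.exists_slot_perm hXY hY
  refine ⟨relabel P, isGEmb_relabel P hΓ hPY, surjOn_relabel P hY hPY, fun a ha => ?_⟩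
  induction a using List.reverseRecOn with
  | nil => rw [hemb.map_root]; rfl
  | append_singleton b c ih =>
    have hb : b ∈ GammaSet Γ X := by simpa using hΓ.take_mem_gammaSet ha b.length
    obtain ⟨i, _ | x⟩ := c
    · rw [hemb.map_append_none hb ha, relabel_append_singleton, ih hb]
      rfl
    · obtain ⟨y, -, hy⟩ := hemb.map_append_some hb ha
      rw [hy, relabel_append_singleton, ih hb]
      simp [hP (h b) i b hb rfl x y ha hy]

end IsGEmb

/-- For a tree plan `Γ` and `m ≤ n`, every embedding `h : Γ(m) → Γ(n)` of
`L_Γ`-structures preserves the projection (`π_m(a) = π_n(h(a))`), and there is an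
automorphism `g` of `Γ(n)` with `g ∘ h = id` on `Γ(m)`. -/
theorem rearrange (Γ : TreePlan) (hΓ : IsTreePlan Γ) (m n : ℕ) (hmn : m ≤ n)
    (h : List (ℕ × Option ℕ) → List (ℕ × Option ℕ))
    (hemb : IsGEmb Γ (GammaN Γ m) (GammaN Γ n) h) :
    (∀ a ∈ GammaN Γ m, piX (h a) = piX a) ∧
    ∃ g : List (ℕ × Option ℕ) → List (ℕ × Option ℕ),
      IsGEmb Γ (GammaN Γ n) (GammaN Γ n) g ∧
      (∀ b ∈ GammaN Γ n, ∃ a ∈ GammaN Γ n, g a = b) ∧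
      (∀ a ∈ GammaN Γ m, g (h a) = a) := by
  obtain ⟨g, hg, hsurj, hinv⟩ := hemb.exists_automorphism_leftInvOn hΓ
    (fun x (hx : x < m) => hx.trans_le hmn) (finite_lt_nat n)
  exact ⟨hemb.map_P, g, hg, fun b hb => hsurj hb, hinv⟩
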